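/- Fix n ≥ 3. Let W ⊂ ℂⁿ be a real 2-plane with orthonormal basis x, v. Then the number |⟨Jx, v⟩| is independent of the choice of orthonormal basis of W, and two real 2-planes W, W′ lie in the same SU(n)-orbit if and only if the corresponding invariants |⟨Jx, v⟩| agree. -/

import Mathlib

/-
The imaginary part `ω(x, v) = Im ⟪x, v⟫ = Re ⟪I • x, v⟫` is a real alternating form, so a change
of real basis of `W` multiplies it by the determinant of the change of basis, which is `±1` between
two real orthonormal bases; hence `|ω(x, v)|` depends only on `W`, and unitary maps preserve it.
Conversely, if the invariants of `(x, v)` and `(y, w)` agree then, after replacing `w` by `-w`, both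
pairs have the same Hermitian Gram matrix, so Gram–Schmidt turns them into orthonormal 2-frames
and a unitary map carries one frame to the other. Since `n ≥ 3`, some basis vector is orthogonal to
the target frame, and multiplying it by a phase corrects the determinant to `1`.
-/

open scoped InnerProductSpace
open Module Submodule

theorem Submodule.span_pair_neg {R M : Type*} [Ring R] [AddCommGroup M] [Module R M] (x y : M) :
    span R {x, -y} = span R {x, y} := by
  rw [span_insert, span_insert, ← Set.neg_singleton, span_neg]

theorem Complex.eq_or_eq_neg_of_abs_im_eq {z z' : ℂ} (hz : z.re = 0) (hz' : z'.re = 0)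
    (h : |z.im| = |z'.im|) : z = z' ∨ z = -z' := by
  rcases abs_eq_abs.1 h with h | h
  · exact Or.inl (Complex.ext (hz.trans hz'.symm) h)
  · exact Or.inr (Complex.ext (by simp [hz, hz']) h)

section Frames

variable {𝕜 E ι : Type*} [RCLike 𝕜] [NormedAddCommGroup E] [InnerProductSpace 𝕜 E]

theorem Orthonormal.smul_of_norm_eq_one {v : ι → E} (hv : Orthonormal 𝕜 v) {u : ι → 𝕜}
    (hu : ∀ i, ‖u i‖ = 1) : Orthonormal 𝕜 fun i => u i • v i := by
  classical
  rw [orthonormal_iff_ite] at hv ⊢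
  intro i j
  rw [inner_smul_left, inner_smul_right, hv i j]
  split_ifs with h
  · subst h
    rw [mul_one, RCLike.conj_mul, hu, RCLike.ofReal_one, one_pow]
  · simp

theorem orthonormal_domRestrict_pair {i j : ι} (hij : i ≠ j) {f : ι → E} (hi : ‖f i‖ = 1)
    (hj : ‖f j‖ = 1) (h : ⟪f i, f j⟫_𝕜 = 0) : Orthonormal 𝕜 (({i, j} : Set ι).domRestrict f) := by
  classical
  rw [orthonormal_iff_ite]
  rintro ⟨k, rfl | rfl⟩ ⟨l, rfl | rfl⟩ <;>
    simp [Subtype.ext_iff, hij, hij.symm, h, inner_eq_zero_symm.1 h, hi, hj,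
      inner_self_eq_norm_sq_to_K]

theorem exists_norm_eq_one_inner_eq_zero [FiniteDimensional 𝕜 E] (h : 2 ≤ finrank 𝕜 E) (x : E) :
    ∃ u : E, ‖u‖ = 1 ∧ ⟪x, u⟫_𝕜 = 0 := by
  have hK : (𝕜 ∙ x)ᗮ ≠ ⊥ := by
    rw [Ne, orthogonal_eq_bot_iff]
    intro htop
    have := finrank_span_le_card (R := 𝕜) ({x} : Set E)
    rw [htop, finrank_top] at this
    simp only [Set.toFinset_singleton, Finset.card_singleton] at this
    omega
  obtain ⟨e, he, he0⟩ := exists_mem_ne_zero_of_ne_bot hK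
  refine ⟨(‖e‖⁻¹ : 𝕜) • e, norm_smul_inv_norm he0, ?_⟩
  rw [inner_smul_right, mem_orthogonal_singleton_iff_inner_right.1 he, mul_zero]

theorem norm_sub_inner_smul_sq {x : E} (hx : ‖x‖ = 1) (v : E) :
    ‖v - ⟪x, v⟫_𝕜 • x‖ ^ 2 = ‖v‖ ^ 2 - ‖⟪x, v⟫_𝕜‖ ^ 2 := by
  have horth : ⟪⟪x, v⟫_𝕜 • x, v - ⟪x, v⟫_𝕜 • x⟫_𝕜 = 0 := by
    rw [inner_smul_left, inner_sub_right, inner_smul_right, inner_self_eq_norm_sq_to_K, hx]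
    simp
  have := norm_add_sq_eq_norm_sq_add_norm_sq_of_inner_eq_zero _ _ horth
  rw [add_sub_cancel, norm_smul, hx, mul_one] at this
  linarith

theorem exists_orthogonal_unit_decomposition [FiniteDimensional 𝕜 E] (h : 2 ≤ finrank 𝕜 E)
    {x : E} (hx : ‖x‖ = 1) (v : E) :
    ∃ u : E, ‖u‖ = 1 ∧ ⟪x, u⟫_𝕜 = 0 ∧ v = ⟪x, v⟫_𝕜 • x + (‖v - ⟪x, v⟫_𝕜 • x‖ : 𝕜) • u := by
  set v₀ := v - ⟪x, v⟫_𝕜 • x with hv₀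
  by_cases h₀ : v₀ = 0
  · obtain ⟨u, hu, hxu⟩ := exists_norm_eq_one_inner_eq_zero h x
    refine ⟨u, hu, hxu, ?_⟩
    rw [h₀, norm_zero, RCLike.ofReal_zero, zero_smul, add_zero, ← sub_eq_zero, ← h₀]
  · refine ⟨(‖v₀‖⁻¹ : 𝕜) • v₀, norm_smul_inv_norm h₀, ?_, ?_⟩
    · simp [v₀, inner_smul_right, inner_sub_right, inner_self_eq_norm_sq_to_K, hx]
    · rw [smul_smul, mul_inv_cancel₀ (by simpa using h₀), one_smul, hv₀, add_sub_cancel]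

variable [Fintype ι] [DecidableEq ι]

theorem OrthonormalBasis.det_equiv_refl (b c : OrthonormalBasis ι 𝕜 E) :
    LinearMap.det (b.equiv c (Equiv.refl ι)).toLinearEquiv.toLinearMap = b.toBasis.det c := by
  have h := b.toBasis.det_comp (b.equiv c (Equiv.refl ι)).toLinearEquiv.toLinearMap b
  have hc : (b.equiv c (Equiv.refl ι)).toLinearEquiv.toLinearMap ∘ b = c := by
    ext1 i; simp
  have hb : b.toBasis.det b = 1 := b.toBasis.det_self
  rwa [hc, hb, mul_one, eq_comm] at h

theorem Orthonormal.exists_linearIsometryEquiv_det_eq_one [FiniteDimensional 𝕜 E]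
    (hcard : finrank 𝕜 E = Fintype.card ι) {s : Set ι} {i₀ : ι} (hi₀ : i₀ ∉ s) {f f' : ι → E}
    (hf : Orthonormal 𝕜 (s.domRestrict f)) (hf' : Orthonormal 𝕜 (s.domRestrict f')) :
    ∃ g : E ≃ₗᵢ[𝕜] E, LinearMap.det g.toLinearEquiv.toLinearMap = 1 ∧ ∀ i ∈ s, g (f i) = f' i := by
  obtain ⟨b, hb⟩ := hf.exists_orthonormalBasis_extension_of_card_eq hcard
  obtain ⟨c, hc⟩ := hf'.exists_orthonormalBasis_extension_of_card_eq hcard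
  set d := b.toBasis.det c
  have hd : ‖d‖ = 1 := b.det_to_matrix_orthonormalBasis c
  set u : ι → 𝕜 := Pi.mulSingle i₀ d⁻¹
  have hu : ∀ i, ‖u i‖ = 1 := by
    intro i
    by_cases hi : i = i₀
    · simp [u, hi, hd]
    · simp [u, hi]
  have hon : Orthonormal 𝕜 fun i => u i • c i := c.orthonormal.smul_of_norm_eq_one hu
  let c' := OrthonormalBasis.mk hon
    (hon.linearIndependent.span_eq_top_of_card_eq_finrank' hcard.symm).ge
  refine ⟨b.equiv c' (Equiv.refl ι), ?_, fun i hi => ?_⟩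
  · rw [OrthonormalBasis.det_equiv_refl, OrthonormalBasis.coe_mk,
      AlternatingMap.map_smul_univ, Fintype.prod_pi_mulSingle', smul_eq_mul,
      inv_mul_cancel₀ (norm_ne_zero_iff.1 (hd ▸ one_ne_zero))]
  · have hi' : i ≠ i₀ := fun h => hi₀ (h ▸ hi)
    rw [← hb i hi, OrthonormalBasis.equiv_apply_basis, OrthonormalBasis.coe_mk]
    simp [u, hi', hc i hi]

theorem exists_linearIsometryEquiv_det_eq_one_map_pair [FiniteDimensional 𝕜 E]
    (h : 3 ≤ finrank 𝕜 E) {x v y w : E} (hx : ‖x‖ = 1) (hv : ‖v‖ = 1) (hy : ‖y‖ = 1)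
    (hw : ‖w‖ = 1) (hxv : ⟪x, v⟫_𝕜 = ⟪y, w⟫_𝕜) :
    ∃ g : E ≃ₗᵢ[𝕜] E, LinearMap.det g.toLinearEquiv.toLinearMap = 1 ∧ g x = y ∧ g v = w := by
  obtain ⟨u, hu, hxu, hvu⟩ := exists_orthogonal_unit_decomposition (𝕜 := 𝕜) (by omega) hx v
  obtain ⟨u', hu', hyu', hwu'⟩ := exists_orthogonal_unit_decomposition (𝕜 := 𝕜) (by omega) hy w
  have hr : ‖w - ⟪y, w⟫_𝕜 • y‖ = ‖v - ⟪x, v⟫_𝕜 • x‖ := by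
    rw [← sq_eq_sq₀ (norm_nonneg _) (norm_nonneg _), norm_sub_inner_smul_sq hy,
      norm_sub_inner_smul_sq hx, hv, hw, hxv]
  obtain ⟨m, hm⟩ : ∃ m, finrank 𝕜 E = Fintype.card (Fin (m + 3)) :=
    ⟨finrank 𝕜 E - 3, by rw [Fintype.card_fin]; omega⟩
  have h01 : (0 : Fin (m + 3)) ≠ 1 := by simp
  obtain ⟨g, hg, hgf⟩ := Orthonormal.exists_linearIsometryEquiv_det_eq_one hm
    (s := {0, 1}) (i₀ := 2) (by simp [Fin.ext_iff, Nat.mod_eq_of_lt (show 2 < m + 3 by omega)])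
    (f := fun i => if i = 0 then x else u) (f' := fun i => if i = 0 then y else u')
    (orthonormal_domRestrict_pair h01 (by simpa using hx) (by simpa [h01.symm] using hu)
      (by simpa [h01.symm] using hxu))
    (orthonormal_domRestrict_pair h01 (by simpa using hy) (by simpa [h01.symm] using hu')
      (by simpa [h01.symm] using hyu'))
  have hgx : g x = y := by simpa using hgf 0 (by simp)
  have hgu : g u = u' := by simpa [h01.symm] using hgf 1 (by simp)
  refine ⟨g, hg, hgx, ?_⟩
  rw [hvu, hwu', map_add, map_smul, map_smul, hgx, hgu, hr, hxv]

end Frames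

section KaehlerForm

variable {E : Type*} [NormedAddCommGroup E] [InnerProductSpace ℂ E]

theorem re_inner_I_smul_left (x v : E) : (⟪Complex.I • x, v⟫_ℂ).re = (⟪x, v⟫_ℂ).im := by
  simp

theorem inner_smul_add_smul_smul_add_smul (x v : E) (a b c d : ℝ) :
    ⟪a • x + b • v, c • x + d • v⟫_ℂ = ((a * c : ℝ) : ℂ) * ⟪x, x⟫_ℂ + ((a * d : ℝ) : ℂ) * ⟪x, v⟫_ℂ
      + ((b * c : ℝ) : ℂ) * ⟪v, x⟫_ℂ + ((b * d : ℝ) : ℂ) * ⟪v, v⟫_ℂ := by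
  simp only [← Complex.coe_smul, inner_add_left, inner_add_right, inner_smul_left,
    inner_smul_right, Complex.conj_ofReal, Complex.ofReal_mul]
  ring

theorem im_inner_smul_add_smul_smul_add_smul (x v : E) (a b c d : ℝ) :
    (⟪a • x + b • v, c • x + d • v⟫_ℂ).im = (a * d - b * c) * (⟪x, v⟫_ℂ).im := by
  have hx : (⟪x, x⟫_ℂ).im = 0 := inner_self_im (𝕜 := ℂ) x
  have hv : (⟪v, v⟫_ℂ).im = 0 := inner_self_im (𝕜 := ℂ) v
  rw [inner_smul_add_smul_smul_add_smul, ← inner_conj_symm v x]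
  simp only [Complex.add_im, Complex.im_ofReal_mul, Complex.conj_im, hx, hv]
  ring

theorem re_inner_smul_add_smul_smul_add_smul (x v : E) (a b c d : ℝ) :
    (⟪a • x + b • v, c • x + d • v⟫_ℂ).re =
      a * c * ‖x‖ ^ 2 + b * d * ‖v‖ ^ 2 + (a * d + b * c) * (⟪x, v⟫_ℂ).re := by
  have hx : (⟪x, x⟫_ℂ).re = ‖x‖ ^ 2 := inner_self_eq_norm_sq (𝕜 := ℂ) x
  have hv : (⟪v, v⟫_ℂ).re = ‖v‖ ^ 2 := inner_self_eq_norm_sq (𝕜 := ℂ) v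
  rw [inner_smul_add_smul_smul_add_smul, ← inner_conj_symm v x]
  simp only [Complex.add_re, Complex.re_ofReal_mul, Complex.conj_re, hx, hv]
  ring

theorem abs_im_inner_eq_of_span_eq {x v x' v' : E} (hx : ‖x‖ = 1) (hv : ‖v‖ = 1)
    (hxv : (⟪x, v⟫_ℂ).re = 0) (hx' : ‖x'‖ = 1) (hv' : ‖v'‖ = 1) (hxv' : (⟪x', v'⟫_ℂ).re = 0)
    (h : span ℝ {x', v'} = span ℝ {x, v}) : |(⟪x', v'⟫_ℂ).im| = |(⟪x, v⟫_ℂ).im| := by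
  obtain ⟨a, b, rfl⟩ := mem_span_pair.1 (h ▸ subset_span (by simp) : x' ∈ span ℝ {x, v})
  obtain ⟨c, d, rfl⟩ := mem_span_pair.1 (h ▸ subset_span (by simp) : v' ∈ span ℝ {x, v})
  have hre : ∀ p q r s : ℝ, (⟪p • x + q • v, r • x + s • v⟫_ℂ).re = p * r + q * s := by
    intro p q r s
    rw [re_inner_smul_add_smul_smul_add_smul, hx, hv, hxv]
    ring
  have hnorm : ∀ u : E, (⟪u, u⟫_ℂ).re = ‖u‖ ^ 2 := fun u => inner_self_eq_norm_sq (𝕜 := ℂ) u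
  have hab : a * a + b * b = 1 := by rw [← hre, hnorm, hx', one_pow]
  have hcd : c * c + d * d = 1 := by rw [← hre, hnorm, hv', one_pow]
  have hac : a * c + b * d = 0 := by rw [← hre, hxv']
  have hdet : |a * d - b * c| = 1 := by
    rw [← sq_eq_sq₀ (abs_nonneg _) zero_le_one, sq_abs]
    linear_combination (c * c + d * d) * hab + hcd - (a * c + b * d) * hac
  rw [im_inner_smul_add_smul_smul_add_smul, abs_mul, hdet, one_mul]

theorem LinearIsometryEquiv.map_restrictScalars_span_pair (g : E ≃ₗᵢ[ℂ] E) (x v : E) :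
    (span ℝ {x, v}).map (g.toLinearEquiv.toLinearMap.restrictScalars ℝ) = span ℝ {g x, g v} := by
  rw [map_span, Set.image_pair]
  rfl

end KaehlerForm

/-- The Kähler angle invariant `|⟨Jx, v⟩|` of a real 2-plane `W ⊂ ℂⁿ` with real
orthonormal basis `{x, v}` is independent of the choice of orthonormal basis,
and (for `n ≥ 3`) two real 2-planes lie in the same `SU(n)`-orbit iff their
invariants agree. -/
theorem kaehler_angle_complete_su_invariant {n : ℕ} (hn : 3 ≤ n)
    (W W' : Submodule ℝ (EuclideanSpace ℂ (Fin n)))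
    (x v y w : EuclideanSpace ℂ (Fin n))
    (hx : ‖x‖ = 1) (hv : ‖v‖ = 1) (hxv : ((inner ℂ x v : ℂ)).re = 0)
    (hW : W = Submodule.span ℝ ({x, v} : Set (EuclideanSpace ℂ (Fin n))))
    (hy : ‖y‖ = 1) (hw : ‖w‖ = 1) (hyw : ((inner ℂ y w : ℂ)).re = 0)
    (hW' : W' = Submodule.span ℝ ({y, w} : Set (EuclideanSpace ℂ (Fin n)))) :
    (∀ x' v' : EuclideanSpace ℂ (Fin n), ‖x'‖ = 1 → ‖v'‖ = 1 →
        ((inner ℂ x' v' : ℂ)).re = 0 →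
        W = Submodule.span ℝ ({x', v'} : Set (EuclideanSpace ℂ (Fin n))) →
        |((inner ℂ ((Complex.I : ℂ) • x') v' : ℂ)).re| =
          |((inner ℂ ((Complex.I : ℂ) • x) v : ℂ)).re|) ∧
    ((∃ g : EuclideanSpace ℂ (Fin n) ≃ₗᵢ[ℂ] EuclideanSpace ℂ (Fin n),
        LinearMap.det (g.toLinearEquiv.toLinearMap) = 1 ∧
        W.map ((g.toLinearEquiv.toLinearMap).restrictScalars ℝ) = W') ↔
      |((inner ℂ ((Complex.I : ℂ) • x) v : ℂ)).re| =
        |((inner ℂ ((Complex.I : ℂ) • y) w : ℂ)).re|) := by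
  simp only [re_inner_I_smul_left]
  refine ⟨fun x' v' hx' hv' hxv' hW₂ =>
    abs_im_inner_eq_of_span_eq hx hv hxv hx' hv' hxv' (hW₂.symm.trans hW), ⟨?_, fun him => ?_⟩⟩
  · rintro ⟨g, -, hgW⟩
    have hspan : span ℝ {g x, g v} = span ℝ {y, w} := by
      rw [← hW', ← hgW, hW, g.map_restrictScalars_span_pair]
    rw [← g.inner_map_map x v]
    exact abs_im_inner_eq_of_span_eq hy hw hyw (by rwa [g.norm_map]) (by rwa [g.norm_map])
      (by rwa [g.inner_map_map]) hspan
  · obtain ⟨w', hw', hxvw', hspan⟩ : ∃ w', ‖w'‖ = 1 ∧ ⟪x, v⟫_ℂ = ⟪y, w'⟫_ℂ ∧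
        span ℝ {y, w'} = span ℝ {y, w} := by
      rcases Complex.eq_or_eq_neg_of_abs_im_eq hxv hyw him with h | h
      · exact ⟨w, hw, h, rfl⟩
      · exact ⟨-w, by rwa [norm_neg], by rw [inner_neg_right, h], span_pair_neg y w⟩
    obtain ⟨g, hg, hgx, hgv⟩ := exists_linearIsometryEquiv_det_eq_one_map_pair
      (by simpa using hn) hx hv hy hw' hxvw'
    exact ⟨g, hg, by rw [hW, hW', g.map_restrictScalars_span_pair, hgx, hgv, hspan]⟩
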